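/- arXiv:2404.07093 — 6 statements merged into one kernel-verified Lean document; each statement's English description precedes it below -/
import Mathlib

section
/- Let R and S be rings. Then the direct product ring R × S satisfies the rank condition if and only if R satisfies the rank condition or S satisfies the rank condition. -/
open Function Matrix MulOpposite

section Aux

variable {A B : Type*} [Ring A] [Ring B]

/-- Existence of a surjective linear map `A^n → A^m`. -/
private def Surj (A : Type*) [Ring A] (n m : ℕ) : Prop :=
  ∃ f : (Fin n → A) →ₗ[A] (Fin m → A), Function.Surjective f

/-- Matrix version: a right-invertible `m × n` matrix (acting on the right). -/
private def MatP (A : Type*) [Ring A] (n m : ℕ) : Prop :=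
  ∃ (M : Matrix (Fin n) (Fin m) A) (N : Matrix (Fin m) (Fin n) A), N * M = 1

private lemma surj_iff_matP {n m : ℕ} : Surj A n m ↔ MatP A n m := by
  constructor
  · rintro ⟨f, hf⟩
    obtain ⟨g, hg⟩ := Module.projective_lifting_property f LinearMap.id hf
    refine ⟨LinearMap.toMatrixRight' f, LinearMap.toMatrixRight' g, ?_⟩
    apply Matrix.toLinearMapRight'.injective
    rw [Matrix.toLinearMapRight'_mul]
    show (Matrix.toLinearMapRight' (LinearMap.toMatrixRight' f)).comp
        (Matrix.toLinearMapRight' (LinearMap.toMatrixRight' g)) = _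
    rw [show Matrix.toLinearMapRight' (LinearMap.toMatrixRight' f) = f from
        LinearMap.toMatrixRight'.symm_apply_apply f,
      show Matrix.toLinearMapRight' (LinearMap.toMatrixRight' g) = g from
        LinearMap.toMatrixRight'.symm_apply_apply g,
      hg, Matrix.toLinearMapRight'_one]
  · rintro ⟨M, N, hMN⟩
    refine ⟨Matrix.toLinearMapRight' M, fun y => ⟨Matrix.toLinearMapRight' N y, ?_⟩⟩
    rw [← Matrix.toLinearMapRight'_mul_apply, hMN, Matrix.toLinearMapRight'_one,
      LinearMap.id_apply]

private lemma matP_map {n m : ℕ} (φ : A →+* B) (h : MatP A n m) : MatP B n m := by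
  obtain ⟨M, N, hMN⟩ := h
  refine ⟨M.map φ, N.map φ, ?_⟩
  rw [← Matrix.map_mul, hMN, Matrix.map_one φ (map_zero φ) (map_one φ)]

private lemma matP_pair {R S : Type*} [Ring R] [Ring S] {n m : ℕ}
    (h1 : MatP R n m) (h2 : MatP S n m) : MatP (R × S) n m := by
  obtain ⟨M₁, N₁, h₁⟩ := h1
  obtain ⟨M₂, N₂, h₂⟩ := h2
  refine ⟨Matrix.of fun i j => (M₁ i j, M₂ i j), Matrix.of fun i j => (N₁ i j, N₂ i j), ?_⟩
  ext i j
  · have := congrFun (congrFun h₁ i) j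
    simpa [Matrix.mul_apply, Matrix.one_apply, Prod.fst_sum, apply_ite Prod.fst] using this
  · have := congrFun (congrFun h₂ i) j
    simpa [Matrix.mul_apply, Matrix.one_apply, Prod.snd_sum, apply_ite Prod.snd] using this

private lemma surj_cast {n m n' m' : ℕ} (hn : n = n') (hm : m = m') (h : Surj A n m) :
    Surj A n' m' := by subst hn; subst hm; exact h

private lemma surj_refl (n : ℕ) : Surj A n n := ⟨LinearMap.id, surjective_id⟩

private lemma surj_trans {n m k : ℕ} (h1 : Surj A n m) (h2 : Surj A m k) : Surj A n k := by
  obtain ⟨f, hf⟩ := h1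
  obtain ⟨g, hg⟩ := h2
  exact ⟨g.comp f, hg.comp hf⟩

private lemma surj_pad {n m : ℕ} (t : ℕ) (h : Surj A n m) : Surj A (n + t) (m + t) := by
  obtain ⟨f, hf⟩ := h
  let e1 : (Fin (n + t) → A) ≃ₗ[A] (Fin n → A) × (Fin t → A) :=
    (LinearEquiv.funCongrLeft A A finSumFinEquiv).trans
      (LinearEquiv.sumArrowLequivProdArrow _ _ A A)
  let e2 : (Fin (m + t) → A) ≃ₗ[A] (Fin m → A) × (Fin t → A) :=
    (LinearEquiv.funCongrLeft A A finSumFinEquiv).trans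
      (LinearEquiv.sumArrowLequivProdArrow _ _ A A)
  refine ⟨e2.symm.toLinearMap.comp ((f.prodMap LinearMap.id).comp e1.toLinearMap), ?_⟩
  simp only [LinearMap.coe_comp, LinearEquiv.coe_coe, LinearMap.coe_prodMap]
  exact e2.symm.surjective.comp ((hf.prodMap surjective_id).comp e1.surjective)

private lemma surj_iter {n d : ℕ} (h : Surj A n (n + d)) :
    ∀ k : ℕ, Surj A n (n + k * d) := by
  intro k
  induction k with
  | zero => exact surj_cast rfl (by omega) (surj_refl n)
  | succ k ih =>
    have hpad : Surj A (n + k * d) (n + (k + 1) * d) :=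
      surj_cast rfl (by ring) (surj_pad (k * d) h)
    exact surj_trans ih hpad

/-- Equalize: from surjections over `A` and `B` of possibly different sizes,
get matrix data over both of a common size `a < b`. -/
private lemma equalize {n₁ m₁ n₂ m₂ : ℕ} (hn₁ : 0 < n₁) (h₁ : n₁ < m₁) (h₂ : n₂ < m₂)
    (hA : Surj A n₁ m₁) (hB : Surj B n₂ m₂) :
    ∃ a b : ℕ, 0 < a ∧ a < b ∧ Surj A a b ∧ Surj B a b := by
  set d₁ := m₁ - n₁ with hd₁
  set d₂ := m₂ - n₂ with hd₂
  set a := n₁ + n₂ with ha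
  refine ⟨a, a + d₁ * d₂, by omega, by
    have : 1 ≤ d₁ := by omega
    have : 1 ≤ d₂ := by omega
    nlinarith, ?_, ?_⟩
  · have hbase : Surj A a (a + d₁) := surj_cast rfl (by omega) (surj_pad n₂ hA)
    exact surj_cast rfl (by ring) (surj_iter hbase d₂)
  · have hbase : Surj B a (a + d₂) :=
      surj_cast (by omega) (by omega) (surj_pad n₁ hB)
    exact surj_cast rfl (by ring) (surj_iter hbase d₁)

end Aux

section OpHoms

variable (R S : Type*) [Ring R] [Ring S]

/-- The projection `(R × S)ᵐᵒᵖ →+* Rᵐᵒᵖ`. -/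
private def opFst : (R × S)ᵐᵒᵖ →+* Rᵐᵒᵖ where
  toFun x := op x.unop.1
  map_one' := rfl
  map_mul' _ _ := rfl
  map_zero' := rfl
  map_add' _ _ := rfl

/-- The projection `(R × S)ᵐᵒᵖ →+* Sᵐᵒᵖ`. -/
private def opSnd : (R × S)ᵐᵒᵖ →+* Sᵐᵒᵖ where
  toFun x := op x.unop.2
  map_one' := rfl
  map_mul' _ _ := rfl
  map_zero' := rfl
  map_add' _ _ := rfl

/-- The canonical map `Rᵐᵒᵖ × Sᵐᵒᵖ →+* (R × S)ᵐᵒᵖ`. -/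
private def prodOp : Rᵐᵒᵖ × Sᵐᵒᵖ →+* (R × S)ᵐᵒᵖ where
  toFun x := op (x.1.unop, x.2.unop)
  map_one' := rfl
  map_mul' _ _ := rfl
  map_zero' := rfl
  map_add' _ _ := rfl

end OpHoms

/-- A ring `R` satisfies the (right) rank condition if for all positive integers
`n < m` there is no surjective homomorphism of right `R`-modules `R^n → R^m`.
Right `R`-modules are treated as left modules over the opposite ring `Rᵐᵒᵖ`. -/
def RightRankCondition (R : Type*) [Ring R] : Prop :=
  ∀ n m : ℕ, 0 < n → n < m →
    ¬ ∃ f : (Fin n → Rᵐᵒᵖ) →ₗ[Rᵐᵒᵖ] (Fin m → Rᵐᵒᵖ), Function.Surjective f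

private lemma rrc_iff (R : Type*) [Ring R] :
    RightRankCondition R ↔ ∀ n m : ℕ, 0 < n → n < m → ¬ Surj Rᵐᵒᵖ n m := Iff.rfl

/-- The direct product ring `R × S` satisfies the rank condition if and only if
`R` satisfies the rank condition or `S` satisfies the rank condition. -/
theorem statement2 (R S : Type*) [Ring R] [Ring S] :
    RightRankCondition (R × S) ↔ RightRankCondition R ∨ RightRankCondition S := by
  rw [rrc_iff, rrc_iff, rrc_iff]
  constructor
  · intro h
    by_contra hc
    push_neg at hc
    obtain ⟨⟨n₁, m₁, hn₁, hnm₁, hA⟩, ⟨n₂, m₂, hn₂, hnm₂, hB⟩⟩ := hc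
    obtain ⟨a, b, ha, hab, hSA, hSB⟩ := equalize hn₁ hnm₁ hnm₂ hA hB
    refine h a b ha hab ?_
    exact surj_iff_matP.mpr <| matP_map (prodOp R S) <|
      matP_pair (surj_iff_matP.mp hSA) (surj_iff_matP.mp hSB)
  · rintro (h | h) n m hn hnm hsurj
    · exact h n m hn hnm (surj_iff_matP.mpr (matP_map (opFst R S) (surj_iff_matP.mp hsurj)))
    · exact h n m hn hnm (surj_iff_matP.mpr (matP_map (opSnd R S) (surj_iff_matP.mp hsurj)))
end

section
/- Let R and S be rings. Then the direct product ring R × S satisfies the strong rank condition if and only if R satisfies the strong rank condition or S satisfies the strong rank condition. -/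
/-- A ring `R` satisfies the (right) strong rank condition if for all positive integers
`m < n` there is no injective homomorphism of right `R`-modules `R^n → R^m`.
Right `R`-modules are treated as left modules over the opposite ring `Rᵐᵒᵖ`. -/
def RightStrongRankCondition (R : Type*) [Ring R] : Prop :=
  ∀ m n : ℕ, 0 < m → m < n →
    ¬ ∃ f : (Fin n → Rᵐᵒᵖ) →ₗ[Rᵐᵒᵖ] (Fin m → Rᵐᵒᵖ), Function.Injective f

/-- The (left-module) version of the strong rank condition, as a plain predicate. -/
def SRC' (T : Type*) [Ring T] : Prop :=
  ∀ m n : ℕ, 0 < m → m < n →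
    ¬ ∃ f : (Fin n → T) →ₗ[T] (Fin m → T), Function.Injective f

/-- Extension by zero, `(Fin a → A) → (Fin b → A)` for `a ≤ b`. -/
def extLin (A : Type*) [Ring A] {a b : ℕ} (_h : a ≤ b) :
    (Fin a → A) →ₗ[A] (Fin b → A) where
  toFun x i := if hi : (i : ℕ) < a then x ⟨i, hi⟩ else 0
  map_add' x y := by funext i; by_cases hi : (i : ℕ) < a <;> simp [hi]
  map_smul' c x := by funext i; by_cases hi : (i : ℕ) < a <;> simp [hi]

lemma extLin_inj (A : Type*) [Ring A] {a b : ℕ} (h : a ≤ b) :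
    Function.Injective (extLin A h) := by
  intro x y hxy
  funext i
  have := congrFun hxy (Fin.castLE h i)
  simpa [extLin, i.isLt] using this

/-- Padding an injective map `A^n ↪ A^m` (with `m < n ≤ N`) to `A^N ↪ A^(N-1)`. -/
lemma pad (A : Type*) [Ring A] {n m N : ℕ} (hmn : m < n) (hN : n ≤ N)
    (f : (Fin n → A) →ₗ[A] (Fin m → A)) (hf : Function.Injective f) :
    ∃ g : (Fin N → A) →ₗ[A] (Fin (N - 1) → A), Function.Injective g := by
  set k := N - n with hk
  have hNk : n + k = N := by omega
  have hmk : m + k ≤ N - 1 := by omega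
  let e1 : (Fin N → A) ≃ₗ[A] (Fin n → A) × (Fin k → A) :=
    (LinearEquiv.funCongrLeft A A
        ((finSumFinEquiv : Fin n ⊕ Fin k ≃ Fin (n + k)).trans (finCongr hNk))).trans
      (LinearEquiv.sumArrowLequivProdArrow _ _ A A)
  let e2 : ((Fin m → A) × (Fin k → A)) ≃ₗ[A] (Fin (m + k) → A) :=
    (LinearEquiv.sumArrowLequivProdArrow _ _ A A).symm.trans
      (LinearEquiv.funCongrLeft A A
        ((finSumFinEquiv : Fin m ⊕ Fin k ≃ Fin (m + k)).symm))
  refine ⟨(extLin A hmk) ∘ₗ e2.toLinearMap ∘ₗ (f.prodMap LinearMap.id) ∘ₗ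
      e1.toLinearMap, ?_⟩
  have hprod : Function.Injective (f.prodMap (LinearMap.id : (Fin k → A) →ₗ[A] _)) := by
    intro x y hxy
    have h1 := congrArg Prod.fst hxy
    have h2 := congrArg Prod.snd hxy
    simp only [LinearMap.prodMap_apply, LinearMap.id_apply] at h1 h2
    exact Prod.ext (hf h1) h2
  simp only [LinearMap.coe_comp]
  exact (((extLin_inj A hmk).comp e2.injective).comp hprod).comp e1.injective

/-- Transport `SRC'` across a ring equivalence. -/
lemma src_congr {T T' : Type*} [Ring T] [Ring T'] (e : T ≃+* T')
    (h : SRC' T) : SRC' T' := by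
  rintro m n hm hmn ⟨f, hf⟩
  apply h m n hm hmn
  refine ⟨{ toFun := fun x i => e.symm (f (fun j => e (x j)) i),
            map_add' := ?_, map_smul' := ?_ }, ?_⟩
  · intro x y
    funext i
    beta_reduce
    have hxy : (fun j => e ((x + y) j)) = (fun j => e (x j)) + fun j => e (y j) := by
      funext j; simp
    rw [hxy, map_add]
    simp
  · intro c x
    funext i
    simp only [LinearMap.coe_mk, AddHom.coe_mk, RingHom.id_apply]
    have hcx : (fun j => e ((c • x) j)) = e c • fun j => e (x j) := by
      funext j
      show e (c * x j) = e c * e (x j)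
      simp
    rw [hcx, map_smul]
    show e.symm (e c * f (fun j => e (x j)) i) = c * e.symm (f (fun j => e (x j)) i)
    simp
  · intro x y hxy
    funext j
    simp only [LinearMap.coe_mk, AddHom.coe_mk] at hxy
    have h1 : ∀ i, e.symm (f (fun j => e (x j)) i) = e.symm (f (fun j => e (y j)) i) :=
      fun i => congrFun hxy i
    have h2 : f (fun j => e (x j)) = f (fun j => e (y j)) := by
      funext i; exact e.symm.injective (h1 i)
    have h3 := hf h2
    have := congrFun h3 j
    exact e.injective this

/-- `(R × S)ᵐᵒᵖ ≃+* Rᵐᵒᵖ × Sᵐᵒᵖ`. -/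
def mopProd (R S : Type*) [Ring R] [Ring S] : (R × S)ᵐᵒᵖ ≃+* Rᵐᵒᵖ × Sᵐᵒᵖ where
  toFun x := (MulOpposite.op x.unop.1, MulOpposite.op x.unop.2)
  invFun p := MulOpposite.op (p.1.unop, p.2.unop)
  left_inv _ := rfl
  right_inv _ := rfl
  map_add' _ _ := rfl
  map_mul' _ _ := rfl

lemma src_prod (A B : Type*) [Ring A] [Ring B] :
    SRC' (A × B) ↔ SRC' A ∨ SRC' B := by
  constructor
  · intro h
    by_contra hc
    push_neg at hc
    obtain ⟨hA, hB⟩ := hc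
    simp only [SRC', not_forall, not_not] at hA hB
    obtain ⟨m₁, n₁, hm₁, hmn₁, f, hf⟩ := hA
    obtain ⟨m₂, n₂, hm₂, hmn₂, g, hg⟩ := hB
    set N := max n₁ n₂ with hNdef
    obtain ⟨f', hf'⟩ := pad A hmn₁ (le_max_left n₁ n₂) f hf
    obtain ⟨g', hg'⟩ := pad B hmn₂ (le_max_right n₁ n₂) g hg
    refine h (N - 1) N (by omega) (by omega) ⟨{
      toFun := fun x i => (f' (fun j => (x j).1) i, g' (fun j => (x j).2) i)
      map_add' := ?_, map_smul' := ?_ }, ?_⟩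
    · intro x y
      funext i
      beta_reduce
      have h1 : (fun j => ((x + y) j).1) = (fun j => (x j).1) + fun j => (y j).1 := rfl
      have h2 : (fun j => ((x + y) j).2) = (fun j => (x j).2) + fun j => (y j).2 := rfl
      rw [h1, h2, map_add, map_add]
      rfl
    · intro c x
      funext i
      simp only [LinearMap.coe_mk, AddHom.coe_mk, RingHom.id_apply]
      have h1 : (fun j => ((c • x) j).1) = c.1 • fun j => (x j).1 := rfl
      have h2 : (fun j => ((c • x) j).2) = c.2 • fun j => (x j).2 := rfl
      rw [h1, h2, map_smul, map_smul]
      rfl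
    · intro x y hxy
      simp only [LinearMap.coe_mk, AddHom.coe_mk] at hxy
      funext j
      have h1 : (fun j => (x j).1) = fun j => (y j).1 := by
        apply hf'
        funext i
        exact congrArg Prod.fst (congrFun hxy i)
      have h2 : (fun j => (x j).2) = fun j => (y j).2 := by
        apply hg'
        funext i
        exact congrArg Prod.snd (congrFun hxy i)
      exact Prod.ext (congrFun h1 j) (congrFun h2 j)
  · rintro (h | h) m n hm hmn ⟨F, hF⟩
    · apply h m n hm hmn
      refine ⟨{ toFun := fun x i => (F (fun j => (x j, (0 : B))) i).1,
                map_add' := ?_, map_smul' := ?_ }, ?_⟩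
      · intro x y
        funext i
        beta_reduce
        have h1 : (fun j => ((x + y) j, (0 : B))) =
            (fun j => (x j, (0 : B))) + fun j => (y j, (0 : B)) := by
          funext j; simp
        rw [h1, map_add]
        rfl
      · intro c x
        funext i
        simp only [LinearMap.coe_mk, AddHom.coe_mk, RingHom.id_apply]
        have h1 : (fun j => ((c • x) j, (0 : B))) =
            ((c, (1 : B)) : A × B) • fun j => (x j, (0 : B)) := by
          funext j
          show ((c * x j, (0 : B))) = ((c, (1 : B)) : A × B) * (x j, (0 : B))
          simp [Prod.ext_iff]
        rw [h1, map_smul]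
        rfl
      · intro x y hxy
        simp only [LinearMap.coe_mk, AddHom.coe_mk] at hxy
        have key : ∀ z : Fin n → A,
            F (fun j => (z j, (0 : B))) = ((1 : A), (0 : B)) • F (fun j => (z j, (0 : B))) := by
          intro z
          conv_lhs => rw [show (fun j => (z j, (0 : B))) =
            (((1 : A), (0 : B)) : A × B) • fun j => (z j, (0 : B)) by
              funext j
              show ((z j, (0 : B))) = (((1 : A), (0 : B)) : A × B) * (z j, (0 : B))
              simp [Prod.ext_iff]]
          rw [map_smul]
        have heq : F (fun j => (x j, (0 : B))) = F (fun j => (y j, (0 : B))) := by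
          funext i
          have hx := congrFun (key x) i
          have hy := congrFun (key y) i
          have h1 : (F (fun j => (x j, (0 : B))) i).1 = (F (fun j => (y j, (0 : B))) i).1 :=
            congrFun hxy i
          have hx2 : (F (fun j => (x j, (0 : B))) i).2 = 0 := by
            rw [hx]; show (0 : B) * _ = 0; simp
          have hy2 : (F (fun j => (y j, (0 : B))) i).2 = 0 := by
            rw [hy]; show (0 : B) * _ = 0; simp
          exact Prod.ext h1 (by rw [hx2, hy2])
        have := hF heq
        funext j
        exact congrArg Prod.fst (congrFun this j)
    · apply h m n hm hmn
      refine ⟨{ toFun := fun x i => (F (fun j => ((0 : A), x j)) i).2,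
                map_add' := ?_, map_smul' := ?_ }, ?_⟩
      · intro x y
        funext i
        beta_reduce
        have h1 : (fun j => ((0 : A), (x + y) j)) =
            (fun j => ((0 : A), x j)) + fun j => ((0 : A), y j) := by
          funext j; simp
        rw [h1, map_add]
        rfl
      · intro c x
        funext i
        simp only [LinearMap.coe_mk, AddHom.coe_mk, RingHom.id_apply]
        have h1 : (fun j => ((0 : A), (c • x) j)) =
            (((1 : A), c) : A × B) • fun j => ((0 : A), x j) := by
          funext j
          show (((0 : A), c * x j)) = (((1 : A), c) : A × B) * ((0 : A), x j)
          simp [Prod.ext_iff]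
        rw [h1, map_smul]
        rfl
      · intro x y hxy
        simp only [LinearMap.coe_mk, AddHom.coe_mk] at hxy
        have key : ∀ z : Fin n → B,
            F (fun j => ((0 : A), z j)) = ((0 : A), (1 : B)) • F (fun j => ((0 : A), z j)) := by
          intro z
          conv_lhs => rw [show (fun j => ((0 : A), z j)) =
            (((0 : A), (1 : B)) : A × B) • fun j => ((0 : A), z j) by
              funext j
              show (((0 : A), z j)) = (((0 : A), (1 : B)) : A × B) * ((0 : A), z j)
              simp [Prod.ext_iff]]
          rw [map_smul]
        have heq : F (fun j => ((0 : A), x j)) = F (fun j => ((0 : A), y j)) := by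
          funext i
          have hx := congrFun (key x) i
          have hy := congrFun (key y) i
          have h2 : (F (fun j => ((0 : A), x j)) i).2 = (F (fun j => ((0 : A), y j)) i).2 :=
            congrFun hxy i
          have hx1 : (F (fun j => ((0 : A), x j)) i).1 = 0 := by
            rw [hx]; show (0 : A) * _ = 0; simp
          have hy1 : (F (fun j => ((0 : A), y j)) i).1 = 0 := by
            rw [hy]; show (0 : A) * _ = 0; simp
          exact Prod.ext (by rw [hx1, hy1]) h2
        have := hF heq
        funext j
        exact congrArg Prod.snd (congrFun this j)

/-- The direct product ring `R × S` satisfies the strong rank condition if and only if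
`R` satisfies the strong rank condition or `S` satisfies the strong rank condition. -/
theorem statement3 (R S : Type*) [Ring R] [Ring S] :
    RightStrongRankCondition (R × S) ↔
      RightStrongRankCondition R ∨ RightStrongRankCondition S := by
  constructor
  · intro h
    exact (src_prod Rᵐᵒᵖ Sᵐᵒᵖ).1 (src_congr (mopProd R S) h)
  · intro h
    exact src_congr (mopProd R S).symm ((src_prod Rᵐᵒᵖ Sᵐᵒᵖ).2 h)
end

section
/- The rank condition is Morita invariant: if R and S are Morita equivalent rings and R satisfies the rank condition, then S satisfies the rank condition. -/
/-!
Let `P` and `Q` be the images of `S` and `R` under the equivalence. Equivalences carry the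
separator `R` of `Mod-R` to a separator, and a finitely generated module is a quotient of finitely
many copies of a separator; hence `R` is a quotient of `P^b`, and `S` one of `Q^c`, so that `P` is
a quotient of `R^c`. A surjection `S^n ↠ S^m` with `n < m` gives `S^n ↠ S^k` for every `k`, hence
`P^n ↠ P^k`, and then `R^(nc+1) ↠ P^n ↠ P^(b(nc+2)) ↠ R^(nc+2)`.
-/

universe u v

open CategoryTheory

open Limits

def Surjects (R M N : Type*) [Ring R] [AddCommGroup M] [Module R M] [AddCommGroup N]
    [Module R N] : Prop :=
  ∃ f : M →ₗ[R] N, Function.Surjective f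

section Surjects

variable {R : Type*} [Ring R] {M N P M' N' : Type*} [AddCommGroup M] [Module R M]
  [AddCommGroup N] [Module R N] [AddCommGroup P] [Module R P]
  [AddCommGroup M'] [Module R M'] [AddCommGroup N'] [Module R N']

theorem LinearEquiv.surjects (e : M ≃ₗ[R] N) : Surjects R M N := ⟨e, e.surjective⟩

theorem Surjects.trans (h₁ : Surjects R M N) (h₂ : Surjects R N P) : Surjects R M P :=
  let ⟨f, hf⟩ := h₁; let ⟨g, hg⟩ := h₂; ⟨g ∘ₗ f, hg.comp hf⟩

theorem Surjects.congr (h : Surjects R M N) (eM : M ≃ₗ[R] M') (eN : N ≃ₗ[R] N') :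
    Surjects R M' N' :=
  (eM.symm.surjects.trans h).trans eN.surjects

theorem Surjects.prodMap (h : Surjects R M N) (h' : Surjects R M' N') :
    Surjects R (M × M') (N × N') :=
  let ⟨f, hf⟩ := h; let ⟨g, hg⟩ := h'; ⟨f.prodMap g, hf.prodMap hg⟩

theorem Surjects.pi (h : Surjects R M N) (ι : Type*) : Surjects R (ι → M) (ι → N) :=
  let ⟨f, hf⟩ := h; ⟨f.compLeft ι, hf.comp_left⟩

theorem surjects_fin_pi_of_le {k l : ℕ} (h : k ≤ l) : Surjects R (Fin l → M) (Fin k → M) :=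
  ⟨LinearMap.funLeft R M (Fin.castLE h),
    LinearMap.funLeft_surjective_of_injective R M _ (Fin.castLE_injective h)⟩

theorem Surjects.fin_pi_mul {a : ℕ} (h : Surjects R (Fin a → M) N) (k : ℕ) :
    Surjects R (Fin (k * a) → M) (Fin k → N) :=
  ((LinearEquiv.funCongrLeft R M finProdFinEquiv).trans
    (LinearEquiv.curry R M (Fin k) (Fin a))).surjects.trans (h.pi (Fin k))

def LinearEquiv.finAddArrowEquivProdArrow (M : Type*) [AddCommGroup M] [Module R M] (k l : ℕ) :
    (Fin (k + l) → M) ≃ₗ[R] (Fin k → M) × (Fin l → M) :=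
  (LinearEquiv.funCongrLeft R M finSumFinEquiv).trans
    (LinearEquiv.sumArrowLequivProdArrow _ _ R M)

theorem Surjects.fin_pi_add {k l : ℕ} (h : Surjects R (Fin k → M) (Fin l → M)) (t : ℕ) :
    Surjects R (Fin (k + t) → M) (Fin (l + t) → M) :=
  (h.prodMap (LinearEquiv.refl R (Fin t → M)).surjects).congr
    (LinearEquiv.finAddArrowEquivProdArrow M k t).symm
    (LinearEquiv.finAddArrowEquivProdArrow M l t).symm

theorem Surjects.fin_pi_of_lt {n m : ℕ} (h : Surjects R (Fin n → M) (Fin m → M)) (hnm : n < m)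
    (k : ℕ) : Surjects R (Fin n → M) (Fin k → M) := by
  have grow : ∀ t, Surjects R (Fin n → M) (Fin (n + t) → M) := by
    intro t
    induction t with
    | zero => exact (LinearEquiv.refl R _).surjects
    | succ t ih => exact ih.trans ((h.fin_pi_add t).trans (surjects_fin_pi_of_le (by omega)))
  exact (grow k).trans (surjects_fin_pi_of_le (by omega))

end Surjects

section ModuleCat

variable {A : Type*} {B : Type*} [Ring A] [Ring B]

theorem Surjects.functor_map {F : ModuleCat.{u} A ⥤ ModuleCat.{v} B} [F.PreservesEpimorphisms]
    {M N : ModuleCat.{u} A} (h : Surjects A M N) : Surjects B (F.obj M) (F.obj N) := by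
  obtain ⟨f, hf⟩ := h
  have : Epi (ModuleCat.ofHom f) := (ModuleCat.epi_iff_surjective _).2 hf
  exact ⟨(F.map (ModuleCat.ofHom f)).hom, (ModuleCat.epi_iff_surjective _).1 inferInstance⟩

noncomputable def CategoryTheory.Functor.mapFinPiIso (F : ModuleCat.{u} A ⥤ ModuleCat.{v} B)
    [PreservesFiniteProducts F] (M : ModuleCat.{u} A) (k : ℕ) :
    F.obj (ModuleCat.of A (Fin k → M)) ≅ ModuleCat.of B (Fin k → F.obj M) :=
  F.mapIso (ModuleCat.piIsoPi fun _ : Fin k => M).symm ≪≫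
    PreservesProduct.iso F (fun _ : Fin k => M) ≪≫ ModuleCat.piIsoPi fun _ : Fin k => F.obj M

theorem ModuleCat.isSeparator_self : IsSeparator (ModuleCat.of A A) := by
  refine (Preadditive.isSeparator_iff _).2 fun X Y f hf => ?_
  ext x
  simpa using
    congr_arg (fun g => g.hom 1) (hf (ModuleCat.ofHom (LinearMap.toSpanSingleton A X x)))

theorem ModuleCat.iSup_range_eq_top_of_isSeparator {G : ModuleCat.{u} A} (hG : IsSeparator G)
    (M : ModuleCat.{u} A) : ⨆ f : G →ₗ[A] M, LinearMap.range f = ⊤ := by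
  let N := ⨆ f : G →ₗ[A] M, LinearMap.range f
  have hq : ModuleCat.ofHom N.mkQ = 0 := by
    refine (Preadditive.isSeparator_iff G).1 hG _ fun g => ?_
    ext x
    exact (Submodule.Quotient.mk_eq_zero N).2
      (le_iSup (fun f : G →ₗ[A] M => LinearMap.range f) g.hom ⟨x, rfl⟩)
  simpa using congr(LinearMap.ker ($hq).hom)

theorem ModuleCat.exists_surjects_fin_pi_of_isSeparator {G : ModuleCat.{u} A}
    (hG : IsSeparator G) (M : ModuleCat.{u} A) [Module.Finite A M] :
    ∃ c : ℕ, Surjects A (Fin c → G) M := by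
  classical
  obtain ⟨s, hs⟩ := CompleteLattice.IsCompactElement.exists_finset_of_le_iSup _
    ((Submodule.fg_iff_compact _).1 Module.Finite.fg_top)
    (fun f : G →ₗ[A] M => LinearMap.range f)
    (iSup_range_eq_top_of_isSeparator hG M).ge
  let Φ : (s → G) →ₗ[A] M := LinearMap.lsum A (fun _ => G) ℕ fun f => f.1
  have hΦ : Function.Surjective Φ := by
    rw [← LinearMap.range_eq_top, eq_top_iff]
    refine hs.trans (iSup₂_le fun f hf => ?_)
    rintro _ ⟨x, rfl⟩
    exact ⟨Pi.single ⟨f, hf⟩ x,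
      LinearMap.lsum_piSingle A (fun _ => G) ℕ (fun f : s => f.1) ⟨f, hf⟩ x⟩
  exact ⟨s.card, (LinearEquiv.funCongrLeft A G s.equivFin).surjects.trans ⟨Φ, hΦ⟩⟩

end ModuleCat

theorem statement9_general {R : Type u} {S : Type v} [Ring R] [Ring S]
    (e : ModuleCat.{u} Rᵐᵒᵖ ≌ ModuleCat.{v} Sᵐᵒᵖ)
    (hR : RightRankCondition R) :
    RightRankCondition S := by
  rintro n m - hnm ⟨f, hf⟩
  let P := e.inverse.obj (ModuleCat.of Sᵐᵒᵖ Sᵐᵒᵖ)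
  obtain ⟨b, hb⟩ := ModuleCat.exists_surjects_fin_pi_of_isSeparator
    (ModuleCat.isSeparator_self.of_equivalence e.symm) (ModuleCat.of Rᵐᵒᵖ Rᵐᵒᵖ)
  obtain ⟨c, hc⟩ := ModuleCat.exists_surjects_fin_pi_of_isSeparator
    (ModuleCat.isSeparator_self.of_equivalence e) (ModuleCat.of Sᵐᵒᵖ Sᵐᵒᵖ)
  have hcP : Surjects Rᵐᵒᵖ (Fin c → Rᵐᵒᵖ) P :=
    (hc.functor_map (F := e.inverse) (M := ModuleCat.of _ (Fin c → _))).congr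
      ((e.inverse.mapFinPiIso _ c).toLinearEquiv.trans
        (LinearEquiv.piCongrRight fun _ => (e.unitIso.app _).symm.toLinearEquiv))
      (LinearEquiv.refl _ _)
  have hPP (k : ℕ) : Surjects Rᵐᵒᵖ (Fin n → P) (Fin k → P) :=
    ((Surjects.fin_pi_of_lt ⟨f, hf⟩ hnm k).functor_map (F := e.inverse)
      (M := ModuleCat.of _ (Fin n → _)) (N := ModuleCat.of _ (Fin k → _))).congr
      (e.inverse.mapFinPiIso (.of Sᵐᵒᵖ Sᵐᵒᵖ) n).toLinearEquiv
      (e.inverse.mapFinPiIso (.of Sᵐᵒᵖ Sᵐᵒᵖ) k).toLinearEquiv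
  let K := n * c + 1
  exact hR K (K + 1) (n * c).succ_pos K.lt_succ_self <|
    ((surjects_fin_pi_of_le (by omega)).trans (hcP.fin_pi_mul n)).trans
      ((hPP _).trans (hb.fin_pi_mul (K + 1)))

/-- The rank condition is Morita invariant: if the categories of right modules over `R`
and over `S` are equivalent via an additive functor and `R` satisfies the rank condition,
then `S` satisfies the rank condition. -/
theorem statement9 {R : Type u} {S : Type v} [Ring R] [Ring S]
    (e : ModuleCat.{u} Rᵐᵒᵖ ≌ ModuleCat.{v} Sᵐᵒᵖ) (he : e.functor.Additive)
    (hR : RightRankCondition R) :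
    RightRankCondition S :=
  statement9_general e hR
end

section
/- Let K be a field and A an infinite-dimensional K-algebra. Then A is exhaustively amenable if and only if for every finite-dimensional K-subspace U of A, every positive integer N, and every real number p > 1, there is a finite-dimensional K-subspace V of A such that dim_K(V) > N and dim_K(UV) < p·dim_K(V). -/
/-- A `K`-algebra `A` is exhaustively amenable if for every pair of finite-dimensional
`K`-subspaces `U, W` of `A` and every real `p > 1` there exists a finite-dimensional
`K`-subspace `V` of `A` with `W ⊆ V` and `dim_K (U*V) < p * dim_K V`.
Here `U*V` denotes the `K`-span of all products `u * v` with `u ∈ U`, `v ∈ V`. -/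
def IsExhaustivelyAmenable (K A : Type*) [Field K] [Ring A] [Algebra K A] : Prop :=
  ∀ U W : Submodule K A, FiniteDimensional K U → FiniteDimensional K W →
    ∀ p : ℝ, 1 < p →
      ∃ V : Submodule K A, FiniteDimensional K V ∧ W ≤ V ∧
        (Module.finrank K ↥(U * V) : ℝ) < p * (Module.finrank K ↥V : ℝ)

/-- In a non-finite-dimensional module there are finite-dimensional submodules of
arbitrarily large finrank. -/
lemma exists_big_submodule (K A : Type*) [Field K] [AddCommGroup A] [Module K A]
    (hA : ¬ FiniteDimensional K A) (N : ℕ) :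
    ∃ W : Submodule K A, FiniteDimensional K W ∧ Module.finrank K W = N := by
  have hrank : (N : Cardinal) ≤ Module.rank K A := by
    by_contra h
    push_neg at h
    exact hA (Module.rank_lt_aleph0_iff.1
      (h.trans_le (Cardinal.nat_lt_aleph0 N).le))
  obtain ⟨f, hf⟩ := exists_linearIndependent_of_le_rank hrank
  refine ⟨Submodule.span K (Set.range f), ?_, ?_⟩
  · exact FiniteDimensional.span_of_finite K (Set.finite_range f)
  · rw [finrank_span_eq_card hf, Fintype.card_fin]

/-- Let `K` be a field and `A` an infinite-dimensional `K`-algebra.  Then `A` is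
exhaustively amenable if and only if for every finite-dimensional subspace `U` of `A`,
every positive integer `N`, and every real `p > 1`, there is a finite-dimensional
subspace `V` of `A` such that `dim_K V > N` and `dim_K (U*V) < p * dim_K V`. -/
theorem statement14 (K A : Type*) [Field K] [Ring A] [Algebra K A]
    (hA : ¬ FiniteDimensional K A) :
    IsExhaustivelyAmenable K A ↔
      ∀ U : Submodule K A, FiniteDimensional K U → ∀ N : ℕ, 0 < N → ∀ p : ℝ, 1 < p →
        ∃ V : Submodule K A, FiniteDimensional K V ∧ N < Module.finrank K V ∧
          (Module.finrank K ↥(U * V) : ℝ) < p * (Module.finrank K ↥V : ℝ) := by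
  constructor
  · -- forward
    intro h U hU N _ p hp
    obtain ⟨W, hWfd, hWrank⟩ := exists_big_submodule K A hA (N + 1)
    obtain ⟨V, hVfd, hWV, hbound⟩ := h U W hU hWfd p hp
    refine ⟨V, hVfd, ?_, hbound⟩
    haveI := hVfd
    have := Submodule.finrank_mono (R := K) (M := A) hWV
    omega
  · -- backward
    intro h U W hU hW p hp
    haveI := hU; haveI := hW
    haveI : FiniteDimensional K ↥(U * W) :=
      (Submodule.fg_iff_finiteDimensional _).1
        (Submodule.FG.mul ((Submodule.fg_iff_finiteDimensional _).2 hU)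
          ((Submodule.fg_iff_finiteDimensional _).2 hW))
    set c : ℝ := (Module.finrank K ↥(U * W) : ℝ) with hc
    set p' : ℝ := (1 + p) / 2 with hp'def
    have hp'1 : 1 < p' := by rw [hp'def]; linarith
    have hp'p : p' < p := by rw [hp'def]; linarith
    have hdiff : 0 < p - p' := by linarith
    obtain ⟨N, hN⟩ := exists_nat_gt (c / (p - p'))
    obtain ⟨V₀, hV₀fd, hV₀rank, hV₀bound⟩ := h U hU (N + 1) (Nat.succ_pos N) p' hp'1
    haveI := hV₀fd
    refine ⟨V₀ ⊔ W, inferInstance, le_sup_right, ?_⟩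
    haveI : FiniteDimensional K ↥(U * V₀) :=
      (Submodule.fg_iff_finiteDimensional _).1
        (Submodule.FG.mul ((Submodule.fg_iff_finiteDimensional _).2 hU)
          ((Submodule.fg_iff_finiteDimensional _).2 hV₀fd))
    have hdistrib : U * (V₀ ⊔ W) = U * V₀ ⊔ U * W := Submodule.mul_sup U V₀ W
    have h1 : Module.finrank K ↥(U * (V₀ ⊔ W)) ≤
        Module.finrank K ↥(U * V₀) + Module.finrank K ↥(U * W) := by
      rw [hdistrib]
      exact Submodule.finrank_add_le_finrank_add_finrank _ _
    have h2 : Module.finrank K ↥V₀ ≤ Module.finrank K ↥(V₀ ⊔ W) :=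
      Submodule.finrank_mono le_sup_left
    have hc_lt : c < (p - p') * N := by
      rw [div_lt_iff₀ hdiff] at hN; linarith [mul_comm (p - p') (N : ℝ)]
    have hNV₀ : (N : ℝ) ≤ (Module.finrank K ↥V₀ : ℝ) := by
      have : N ≤ Module.finrank K ↥V₀ := by omega
      exact_mod_cast this
    have h2' : (Module.finrank K ↥V₀ : ℝ) ≤ (Module.finrank K ↥(V₀ ⊔ W) : ℝ) := by
      exact_mod_cast h2
    have h1' : (Module.finrank K ↥(U * (V₀ ⊔ W)) : ℝ) ≤
        (Module.finrank K ↥(U * V₀) : ℝ) + c := by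
      rw [hc]; exact_mod_cast h1
    have hp'pos : 0 < p' := by linarith
    calc (Module.finrank K ↥(U * (V₀ ⊔ W)) : ℝ)
        ≤ (Module.finrank K ↥(U * V₀) : ℝ) + c := h1'
      _ < p' * (Module.finrank K ↥V₀ : ℝ) + (p - p') * N := by linarith
      _ ≤ p' * (Module.finrank K ↥(V₀ ⊔ W) : ℝ)
          + (p - p') * (Module.finrank K ↥(V₀ ⊔ W) : ℝ) := by
          have : (N : ℝ) ≤ (Module.finrank K ↥(V₀ ⊔ W) : ℝ) := le_trans hNV₀ h2'
          nlinarith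
      _ = p * (Module.finrank K ↥(V₀ ⊔ W) : ℝ) := by ring
end

section
/- Let K be a field, A an infinite-dimensional K-algebra, and p a real number with p > 1. Then A is not exhaustively amenable if and only if there are a finite-dimensional K-subspace U of A and a positive integer N such that dim_K(UV) ≥ p·dim_K(V) for every finite-dimensional K-subspace V of A with dim_K(V) > N. -/
open Module Submodule

section aux
variable {K A : Type*} [Field K] [Ring A] [Algebra K A]

lemma aux_fd_mul {U V : Submodule K A} (hU : FiniteDimensional K U)
    (hV : FiniteDimensional K V) : FiniteDimensional K ↥(U * V) :=
  Module.Finite.iff_fg.mpr (Submodule.FG.mul (Module.Finite.iff_fg.mp hU)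
    (Module.Finite.iff_fg.mp hV))

lemma aux_fd_one : FiniteDimensional K (1 : Submodule K A) := by
  rw [Submodule.one_eq_span]
  infer_instance

lemma aux_fd_pow {U : Submodule K A} (hU : FiniteDimensional K U) (n : ℕ) :
    FiniteDimensional K ↥(U ^ n) := by
  induction n with
  | zero => rw [pow_zero]; exact aux_fd_one
  | succ m ihm => rw [pow_succ]; exact aux_fd_mul ihm hU

end aux

/-- Let `K` be a field, `A` an infinite-dimensional `K`-algebra, and `p > 1` a real
number.  Then `A` is not exhaustively amenable if and only if there are a
finite-dimensional subspace `U` of `A` and a positive integer `N` such that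
`dim_K (U*V) ≥ p * dim_K V` for every finite-dimensional subspace `V` of `A` with
`dim_K V > N`. -/
theorem statement16 (K A : Type*) [Field K] [Ring A] [Algebra K A]
    (hA : ¬ FiniteDimensional K A) (p : ℝ) (hp : 1 < p) :
    ¬ IsExhaustivelyAmenable K A ↔
      ∃ (U : Submodule K A) (N : ℕ), FiniteDimensional K U ∧ 0 < N ∧
        ∀ V : Submodule K A, FiniteDimensional K V → N < Module.finrank K V →
          p * (Module.finrank K ↥V : ℝ) ≤ (Module.finrank K ↥(U * V) : ℝ) := by
  constructor
  · intro hna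
    rw [IsExhaustivelyAmenable] at hna
    push_neg at hna
    obtain ⟨U, W, hU, hW, q, hq, hkey⟩ := hna
    -- enlarge U to contain 1
    set U' : Submodule K A := U ⊔ 1 with hU'def
    haveI : FiniteDimensional K (1 : Submodule K A) := aux_fd_one
    have hU' : FiniteDimensional K U' := Submodule.finiteDimensional_sup U 1
    have key : ∀ V : Submodule K A, FiniteDimensional K V → W ≤ V →
        q * (finrank K V : ℝ) ≤ (finrank K ↥(U' * V) : ℝ) := by
      intro V hV hWV
      have h1 := hkey V hV hWV
      have hle : U * V ≤ U' * V := mul_le_mul' le_sup_left le_rfl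
      have : FiniteDimensional K ↥(U' * V) := aux_fd_mul hU' hV
      have h2 : finrank K ↥(U * V) ≤ finrank K ↥(U' * V) := Submodule.finrank_mono hle
      calc q * (finrank K V : ℝ) ≤ (finrank K ↥(U * V) : ℝ) := h1
        _ ≤ (finrank K ↥(U' * V) : ℝ) := by exact_mod_cast h2
    -- iterated claim
    have claim : ∀ n : ℕ, ∀ V : Submodule K A, FiniteDimensional K V → W ≤ V →
        FiniteDimensional K ↥(U' ^ n * V) ∧ V ≤ U' ^ n * V ∧
        q ^ n * (finrank K V : ℝ) ≤ (finrank K ↥(U' ^ n * V) : ℝ) := by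
      intro n
      induction n with
      | zero =>
        intro V hV hWV
        rw [pow_zero, Submodule.one_mul]
        exact ⟨hV, le_rfl, by rw [pow_zero, one_mul]⟩
      | succ n ih =>
        intro V hV hWV
        obtain ⟨hfd, hle, hdim⟩ := ih V hV hWV
        have heq : U' ^ (n + 1) * V = U' * (U' ^ n * V) := by
          rw [pow_succ', mul_assoc]
        have hWle : W ≤ U' ^ n * V := le_trans hWV hle
        have h1 := key (U' ^ n * V) hfd hWle
        refine ⟨heq ▸ aux_fd_mul hU' hfd, ?_, ?_⟩
        · rw [heq]
          calc V ≤ U' ^ n * V := hle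
            _ = 1 * (U' ^ n * V) := (Submodule.one_mul _).symm
            _ ≤ U' * (U' ^ n * V) := mul_le_mul' le_sup_right le_rfl
        · rw [heq]
          have hq0 : (0 : ℝ) < q := lt_trans zero_lt_one hq
          calc q ^ (n + 1) * (finrank K V : ℝ)
              = q * (q ^ n * (finrank K V : ℝ)) := by ring
            _ ≤ q * (finrank K ↥(U' ^ n * V) : ℝ) := by
                exact mul_le_mul_of_nonneg_left hdim (le_of_lt hq0)
            _ ≤ (finrank K ↥(U' * (U' ^ n * V)) : ℝ) := h1
    -- choose n with p + 1 < q ^ n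
    obtain ⟨n, hn⟩ := pow_unbounded_of_one_lt (p + 1) hq
    have hUn : FiniteDimensional K ↥(U' ^ n : Submodule K A) := aux_fd_pow hU' n
    set C : ℕ := finrank K ↥(U' ^ n * W) with hC
    refine ⟨U' ^ n, C + 1, hUn, Nat.succ_pos _, ?_⟩
    intro V hV hdimV
    have hfdW : FiniteDimensional K ↥(U' ^ n * W) := aux_fd_mul hUn hW
    set V₁ : Submodule K A := V ⊔ W with hV₁
    have hfdV₁ : FiniteDimensional K V₁ := Submodule.finiteDimensional_sup V W
    obtain ⟨hfd1, hle1, hdim1⟩ := claim n V₁ hfdV₁ le_sup_right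
    have hmulsup : U' ^ n * V₁ = U' ^ n * V ⊔ U' ^ n * W := Submodule.mul_sup _ _ _
    have hfdUV : FiniteDimensional K ↥(U' ^ n * V) := aux_fd_mul hUn hV
    have hsup_le : finrank K ↥(U' ^ n * V₁) ≤ finrank K ↥(U' ^ n * V) + C := by
      rw [hmulsup]
      exact Submodule.finrank_add_le_finrank_add_finrank _ _
    have hVle : finrank K V ≤ finrank K V₁ := Submodule.finrank_mono le_sup_left
    -- now do the arithmetic
    have h1 : q ^ n * (finrank K V₁ : ℝ) ≤ (finrank K ↥(U' ^ n * V₁) : ℝ) := hdim1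
    have h2 : (finrank K ↥(U' ^ n * V₁) : ℝ) ≤ (finrank K ↥(U' ^ n * V) : ℝ) + C := by
      exact_mod_cast hsup_le
    have h3 : (finrank K V : ℝ) ≤ (finrank K V₁ : ℝ) := by exact_mod_cast hVle
    have h4 : (C : ℝ) < (finrank K V : ℝ) := by
      have : C < finrank K V := lt_of_le_of_lt (Nat.le_succ C) hdimV
      exact_mod_cast this
    have h5 : (p + 1) < q ^ n := hn
    have hd0 : (0 : ℝ) ≤ (finrank K V : ℝ) := Nat.cast_nonneg _
    nlinarith [mul_le_mul_of_nonneg_left h3 (le_of_lt (lt_trans (by linarith) h5 : (0:ℝ) < q ^ n))]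
  · rintro ⟨U, N, hU, hN, h⟩ ham
    -- find W of dimension N + 1
    have hrank : (N + 1 : Cardinal) ≤ Module.rank K A := by
      rw [FiniteDimensional, ← Module.rank_lt_aleph0_iff, not_lt] at hA
      refine le_trans (le_of_lt ?_) hA
      exact_mod_cast Cardinal.nat_lt_aleph0 (N + 1)
    have hrank' : ((N + 1 : ℕ) : Cardinal) ≤ Module.rank K A := by exact_mod_cast hrank
    obtain ⟨s, hcard, hli⟩ := exists_finset_linearIndependent_of_le_rank hrank'
    set W : Submodule K A := Submodule.span K (s : Set A) with hW
    have hfdW : FiniteDimensional K W := FiniteDimensional.span_finset K s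
    have hdimW : finrank K W = N + 1 := by
      rw [hW, finrank_span_finset_eq_card hli, hcard]
    obtain ⟨V, hV, hWV, hlt⟩ := ham U W hU hfdW p hp
    have hdimV : N < finrank K V := by
      have := Submodule.finrank_mono (M := A) hWV
      omega
    have := h V hV hdimV
    linarith
end

section
/- Let K be a field and A a K-algebra possessing a K-basis given by a subset Σ of A. Suppose that for every real number p > 1, every finite subset K' of Σ, and every positive integer N, there is a finite subset F of Σ such that |F| > N and |K'F \ {0}| < p·|F|, where K'F = {kf : k ∈ K', f ∈ F}. Then A is exhaustively amenable. -/
open Pointwise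

namespace Submodule

theorem FG.exists_finset_subset_le_span {R M : Type*} [Semiring R] [AddCommMonoid M]
    [Module R M] {S : Set M} {U : Submodule R M} (hU : U.FG) (hUS : U ≤ span R S) :
    ∃ T : Finset M, (T : Set M) ⊆ S ∧ U ≤ span R (T : Set M) := by
  classical
  obtain ⟨g, rfl⟩ := hU
  rw [span_le] at hUS
  induction g using Finset.induction_on with
  | empty => exact ⟨∅, by simp, by simp⟩
  | insert a g _ ih =>
    rw [Finset.coe_insert, Set.insert_subset_iff] at hUS
    obtain ⟨T, hTS, hgT⟩ := ih hUS.2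
    obtain ⟨Ta, hTaS, haTa⟩ := mem_span_finite_of_mem_span hUS.1
    refine ⟨Ta ∪ T, by simp [hTaS, hTS], ?_⟩
    rw [Finset.coe_insert, span_insert, Finset.coe_union, span_union]
    exact sup_le_sup ((span_singleton_le_iff_mem _ _).mpr haTa) hgT

instance finite_mul {R A : Type*} [CommSemiring R] [Semiring A] [Algebra R A]
    (M N : Submodule R A) [Module.Finite R M] [Module.Finite R N] :
    Module.Finite R ↥(M * N) :=
  Module.Finite.iff_fg.mpr <| (Module.Finite.iff_fg.mp ‹_›).mul (Module.Finite.iff_fg.mp ‹_›)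

theorem finrank_span_mul_span_le_ncard {R A : Type*} [CommRing R] [StrongRankCondition R]
    [Ring A] [Algebra R A] (s t : Finset A) :
    Module.finrank R ↥(span R (s : Set A) * span R (t : Set A)) ≤
      (((s : Set A) * (t : Set A)) \ {0}).ncard := by
  classical
  rw [span_mul_span, ← span_sdiff_singleton_zero, ← Finset.coe_mul, ← Finset.coe_erase,
    Set.ncard_coe_finset]
  exact finrank_span_finset_le_card _

theorem finrank_mul_sup_le {K A : Type*} [Field K] [Ring A] [Algebra K A]
    (U V W : Submodule K A) [FiniteDimensional K U] [FiniteDimensional K V]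
    [FiniteDimensional K W] :
    Module.finrank K ↥(U * (V ⊔ W)) ≤ Module.finrank K ↥(U * V) + Module.finrank K ↥(U * W) := by
  rw [mul_sup]
  exact finrank_add_le_finrank_add_finrank _ _

end Submodule

/-- Let `K` be a field and `A` a `K`-algebra with a `K`-basis given by a subset
`Sgm ⊆ A`.  Suppose that for every real `p > 1`, every finite subset `K' ⊆ Sgm`, and
every positive integer `N`, there is a finite subset `F ⊆ Sgm` such that `|F| > N` and
`|K'F \ {0}| < p * |F|`, where `K'F = {k * f : k ∈ K', f ∈ F}`.  Then `A` is
exhaustively amenable. -/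
theorem statement19 (K A : Type*) [Field K] [Ring A] [Algebra K A] (Sgm : Set A)
    (hbasis : LinearIndependent K ((↑) : Sgm → A) ∧ Submodule.span K Sgm = ⊤)
    (hcomb : ∀ p : ℝ, 1 < p → ∀ K' : Finset A, (K' : Set A) ⊆ Sgm → ∀ N : ℕ, 0 < N →
      ∃ F : Finset A, (F : Set A) ⊆ Sgm ∧ N < F.card ∧
        ((((K' : Set A) * (F : Set A)) \ {0}).ncard : ℝ) < p * F.card) :
    IsExhaustivelyAmenable K A := by
  obtain ⟨hli, hspan⟩ := hbasis
  intro U W _ _ p hp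
  obtain ⟨K', hK'Sgm, hUK'⟩ := (Module.Finite.iff_fg.mp ‹_›).exists_finset_subset_le_span
    (hspan ▸ le_top : U ≤ Submodule.span K Sgm)
  obtain ⟨q, hq, hqp⟩ := exists_between hp
  set c : ℕ := Module.finrank K ↥(U * W)
  obtain ⟨N, hN⟩ := exists_nat_gt ((c : ℝ) / (p - q))
  obtain ⟨F, hFSgm, hNF, hK'F⟩ := hcomb q hq K' hK'Sgm (N + 1) N.succ_pos
  set V : Submodule K A := Submodule.span K (F : Set A) ⊔ W
  refine ⟨V, inferInstance, le_sup_right, ?_⟩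
  have hUV : Module.finrank K ↥(U * V) ≤ (((K' : Set A) * (F : Set A)) \ {0}).ncard + c :=
    (Submodule.finrank_mul_sup_le _ _ _).trans <| Nat.add_le_add_right
      ((Submodule.finrank_mono (mul_le_mul_left hUK' _)).trans
        (Submodule.finrank_span_mul_span_le_ncard _ _)) _
  have hFV : F.card ≤ Module.finrank K ↥V :=
    (finrank_span_finset_eq_card ((show LinearIndepOn K id Sgm from hli).mono hFSgm)).ge.trans
      (Submodule.finrank_mono le_sup_left)
  have hc : (c : ℝ) < (p - q) * F.card := by
    rw [div_lt_iff₀ (sub_pos.mpr hqp)] at hN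
    have : (N : ℝ) + 1 < F.card := by exact_mod_cast hNF
    nlinarith
  calc (Module.finrank K ↥(U * V) : ℝ)
      ≤ (((K' : Set A) * (F : Set A)) \ {0}).ncard + c := by exact_mod_cast hUV
    _ < q * F.card + (p - q) * F.card := add_lt_add hK'F hc
    _ = p * F.card := by ring
    _ ≤ p * Module.finrank K ↥V := by gcongr
end
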